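/- arXiv:1304.3041 — 3 statements merged into one kernel-verified Lean document; each statement's English description precedes it below -/
import Mathlib

section
/- Let X ∈ aut_CR(M) be an infinitesimal CR-automorphism of M and let X = X_{−ρ} + ⋯ + X_{−1} + X_0 + X_1 + ⋯ be its decomposition into weighted homogeneous components X_t of weight t, where X_t = Σ_j Z^j_{(1+t)} ∂_{z_j} + Σ_l W^l_{(ℓ_l+t)} ∂_{w_l} and F_{(d)} denotes the sum of the terms of weighted degree d in the Taylor expansion of F at 0. Then each component X_t is itself an infinitesimal CR-automorphism of M, i.e. X_t ∈ aut_CR(M) for every t ≥ −ρ. -/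
/-!
The dilations `(z, w) ↦ (c z, c ^ ℓ w)` with `c` real preserve `M`, because each `Φ_l` is
weighted homogeneous of weight `ℓ_l` and `u = Re w` scales like `w`. Fix `p ∈ M` and pull the
condition `(X + X̄)[v_l - Φ_l] = 0` back along them: since `∂Φ_l/∂x` scales like `c ^ (ℓ_l - [x])`,
the defect of `X` at the dilated point is a polynomial in `c` whose coefficient of degree `ℓ_l + t`
is the defect of `X_t` at `p`. It vanishes for every real `c`, so all these coefficients vanish.
-/

open MvPolynomial Complex

noncomputable section

/-- The complex variables (z_1,…,z_n,w_1,…,w_k). -/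
abbrev ZW (n k : ℕ) := Sum (Fin n) (Fin k)

/-- The (real) arguments (z, z̄, u) of the defining polynomials Φ_l. -/
abbrev ZZU (n k : ℕ) := Sum (Fin n) (Sum (Fin n) (Fin k))

/-- Weights: each `z_j` has weight 1, each `w_l` has weight `ℓ l`. -/
def wtZW (n k : ℕ) (ℓ : Fin k → ℤ) : ZW n k → ℤ :=
  Sum.elim (fun _ => 1) ℓ

/-- Weights on (z, z̄, u): a conjugate variable or a real part carries the same weight
as the variable itself. -/
def wtZZU (n k : ℕ) (ℓ : Fin k → ℤ) : ZZU n k → ℤ :=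
  Sum.elim (fun _ => 1) (Sum.elim (fun _ => 1) ℓ)

/-- The point (z, z̄, u) at which the defining polynomials are evaluated,
where u = Re w. -/
def zzuPt {n k : ℕ} (z : Fin n → ℂ) (w : Fin k → ℂ) : ZZU n k → ℂ :=
  Sum.elim z (Sum.elim (fun j => starRingEnd ℂ (z j)) (fun l => ((w l).re : ℂ)))

/-- The point (z, w) of ℂ^{n+k}. -/
def zwPt {n k : ℕ} (z : Fin n → ℂ) (w : Fin k → ℂ) : ZW n k → ℂ :=
  Sum.elim z w

/-- The CR-generic submanifold M = {(z,w) : v_l = Φ_l(z, z̄, u), l = 1,…,k},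
where w_l = u_l + i v_l. -/
def Mset (n k : ℕ) (Φ : Fin k → MvPolynomial (ZZU n k) ℂ) :
    Set ((Fin n → ℂ) × (Fin k → ℂ)) :=
  {p | ∀ l, (((p.2 l).im : ℂ)) = eval (zzuPt p.1 p.2) (Φ l)}

/-- The holomorphic vector field X = Σ_j Z^j ∂_{z_j} + Σ_l W^l ∂_{w_l} (with polynomial
coefficients) is an infinitesimal CR-automorphism of M when (X + X̄)[v_l − Φ_l] vanishes
at every point of M, for every l.  Here, using v_l = (w_l − w̄_l)/(2i) and
u_m = (w_m + w̄_m)/2, one has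
(X + X̄)[v_l − Φ_l] = (W^l − conj W^l)/(2i) − Σ_j Z^j ∂Φ_l/∂z_j
  − Σ_j conj(Z^j) ∂Φ_l/∂z̄_j − Σ_m ((W^m + conj W^m)/2) ∂Φ_l/∂u_m. -/
def IsCRAut (n k : ℕ) (Φ : Fin k → MvPolynomial (ZZU n k) ℂ)
    (Z : Fin n → MvPolynomial (ZW n k) ℂ) (W : Fin k → MvPolynomial (ZW n k) ℂ) : Prop :=
  ∀ z w, (z, w) ∈ Mset n k Φ → ∀ l,
    (eval (zwPt z w) (W l) - starRingEnd ℂ (eval (zwPt z w) (W l))) / (2 * I)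
      - (∑ j, eval (zwPt z w) (Z j) * eval (zzuPt z w) (pderiv (Sum.inl j) (Φ l)))
      - (∑ j, starRingEnd ℂ (eval (zwPt z w) (Z j)) *
          eval (zzuPt z w) (pderiv (Sum.inr (Sum.inl j)) (Φ l)))
      - (∑ m, ((eval (zwPt z w) (W m) + starRingEnd ℂ (eval (zwPt z w) (W m))) / 2) *
          eval (zzuPt z w) (pderiv (Sum.inr (Sum.inr m)) (Φ l)))
      = 0

/-- A vector field is weighted homogeneous of weight `t` iff each coefficient `Z^j` of
`∂_{z_j}` is weighted homogeneous of weight `1 + t` and each coefficient `W^l` of `∂_{w_l}`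
is weighted homogeneous of weight `ℓ l + t`. -/
def IsHomVF (n k : ℕ) (ℓ : Fin k → ℤ) (t : ℤ)
    (Z : Fin n → MvPolynomial (ZW n k) ℂ) (W : Fin k → MvPolynomial (ZW n k) ℂ) : Prop :=
  (∀ j, (Z j).IsWeightedHomogeneous (wtZW n k ℓ) (1 + t)) ∧
  (∀ l, (W l).IsWeightedHomogeneous (wtZW n k ℓ) (ℓ l + t))

lemma Finsupp.natCast_weight_toNat {σ : Type*} {w : σ → ℤ} (hw : ∀ i, 0 ≤ w i)
    (m : σ →₀ ℕ) : ((Finsupp.weight (fun i => (w i).toNat) m : ℕ) : ℤ) = Finsupp.weight w m := by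
  simp only [Finsupp.weight_apply, Finsupp.sum, Nat.cast_sum, smul_eq_mul, nsmul_eq_mul,
    Nat.cast_mul, Int.toNat_of_nonneg (hw _)]

namespace MvPolynomial

variable {σ R : Type*} [CommRing R] {w : σ → ℤ}

def dilation (w : σ → ℤ) (x : σ → R) : MvPolynomial σ R →ₐ[R] Polynomial R :=
  aeval fun i => Polynomial.C (x i) * Polynomial.X ^ (w i).toNat

lemma dilation_monomial (x : σ → R) (m : σ →₀ ℕ) (a : R) :
    dilation w x (monomial m a) =
      Polynomial.C (eval x (monomial m a)) *
        Polynomial.X ^ Finsupp.weight (fun i => (w i).toNat) m := by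
  rw [dilation, aeval_monomial, eval_monomial, Finsupp.prod, Finsupp.prod, Finsupp.weight_apply,
    Finsupp.sum, ← Finset.prod_pow_eq_pow_sum]
  simp only [mul_pow, Finset.prod_mul_distrib, Polynomial.algebraMap_eq, map_mul, map_prod,
    map_pow, smul_eq_mul, ← pow_mul, mul_comm (m _), mul_assoc]

lemma eval_dilation (x : σ → R) (c : R) (F : MvPolynomial σ R) :
    (dilation w x F).eval c = eval (fun i => c ^ (w i).toNat * x i) F := by
  induction F using MvPolynomial.induction_on' with
  | add F G hF hG => simp [hF, hG]
  | monomial m a =>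
    rw [dilation_monomial, Polynomial.eval_C_mul, Polynomial.eval_X_pow, eval_monomial,
      eval_monomial, Finsupp.prod, Finsupp.prod, Finsupp.weight_apply, Finsupp.sum,
      ← Finset.prod_pow_eq_pow_sum]
    simp only [mul_pow, Finset.prod_mul_distrib, smul_eq_mul, ← pow_mul, mul_comm (m _)]
    ring

lemma coeff_dilation (hw : ∀ i, 0 ≤ w i) (x : σ → R) (F : MvPolynomial σ R) (e : ℕ) :
    (dilation w x F).coeff e = eval x (weightedHomogeneousComponent w e F) := by
  classical
  induction F using MvPolynomial.induction_on' with
  | add F G hF hG => simp [hF, hG]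
  | monomial m a =>
    have hm := isWeightedHomogeneous_monomial w m a rfl
    rw [dilation_monomial, Polynomial.coeff_C_mul_X_pow]
    by_cases he : (e : ℤ) = Finsupp.weight w m
    · rw [if_pos (by rw [← Finsupp.natCast_weight_toNat hw] at he; omega), he,
        hm.weightedHomogeneousComponent_same]
    · rw [if_neg (by rw [← Finsupp.natCast_weight_toNat hw] at he; omega),
        hm.weightedHomogeneousComponent_ne _ he, map_zero]

lemma weightedHomogeneousComponent_of_neg (hw : ∀ i, 0 ≤ w i) {d : ℤ} (hd : d < 0)
    (F : MvPolynomial σ R) : weightedHomogeneousComponent w d F = 0 := by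
  classical
  ext m
  rw [coeff_weightedHomogeneousComponent, if_neg, coeff_zero]
  rw [← Finsupp.natCast_weight_toNat hw]
  omega

lemma coeff_dilation_mul_X_pow (hw : ∀ i, 0 ≤ w i) (x : σ → R) (F : MvPolynomial σ R)
    (e K : ℕ) :
    (dilation w x F * Polynomial.X ^ K).coeff e =
      eval x (weightedHomogeneousComponent w ((e : ℤ) - K) F) := by
  rw [Polynomial.coeff_mul_X_pow']
  split_ifs with hK
  · rw [coeff_dilation hw, Nat.cast_sub hK]
  · rw [weightedHomogeneousComponent_of_neg hw (by omega), map_zero]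

lemma IsWeightedHomogeneous.eq_zero_of_neg (hw : ∀ i, 0 ≤ w i) {F : MvPolynomial σ R} {d : ℤ}
    (hF : F.IsWeightedHomogeneous w d) (hd : d < 0) : F = 0 := by
  rw [← hF.weightedHomogeneousComponent_same, weightedHomogeneousComponent_of_neg hw hd]

lemma IsWeightedHomogeneous.eval_pow_weight_mul (hw : ∀ i, 0 ≤ w i) {F : MvPolynomial σ R}
    {d : ℤ} (hF : F.IsWeightedHomogeneous w d) (x : σ → R) (c : R) :
    eval (fun i => c ^ (w i).toNat * x i) F = c ^ d.toNat * eval x F := by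
  rcases lt_or_ge d 0 with hd | hd
  · simp [hF.eq_zero_of_neg hw hd]
  have hdil : dilation w x F = Polynomial.C (eval x F) * Polynomial.X ^ d.toNat := by
    ext e
    rw [coeff_dilation hw, Polynomial.coeff_C_mul_X_pow]
    split_ifs with he
    · rw [he, Int.toNat_of_nonneg hd, hF.weightedHomogeneousComponent_same]
    · rw [hF.weightedHomogeneousComponent_ne _ (by omega), map_zero]
  rw [← eval_dilation, hdil, Polynomial.eval_C_mul, Polynomial.eval_X_pow, mul_comm]

end MvPolynomial

lemma Polynomial.eval_map_conj_ofReal (p : Polynomial ℂ) (c : ℝ) :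
    (p.map (starRingEnd ℂ)).eval (c : ℂ) = starRingEnd ℂ (p.eval (c : ℂ)) := by
  rw [Polynomial.eval_map, ← conj_ofReal, Polynomial.eval₂_at_apply, conj_ofReal]

lemma Polynomial.eq_zero_of_forall_eval_ofReal (p : Polynomial ℂ)
    (h : ∀ c : ℝ, p.eval (c : ℂ) = 0) : p = 0 :=
  p.eq_zero_of_infinite_isRoot <| (Set.infinite_range_of_injective ofReal_injective).mono <| by
    rintro _ ⟨c, rfl⟩
    exact h c

section CRDilation

variable {n k : ℕ} {ℓ : Fin k → ℤ}

lemma wtZW_nonneg (hℓ : ∀ l, 0 ≤ ℓ l) (i : ZW n k) : 0 ≤ wtZW n k ℓ i := by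
  rcases i with j | m
  exacts [zero_le_one, hℓ m]

lemma wtZZU_nonneg (hℓ : ∀ l, 0 ≤ ℓ l) (i : ZZU n k) : 0 ≤ wtZZU n k ℓ i := by
  rcases i with j | j | m
  exacts [zero_le_one, zero_le_one, hℓ m]

lemma zwPt_dilate (c : ℂ) (z : Fin n → ℂ) (w : Fin k → ℂ) :
    zwPt (fun j => c * z j) (fun m => c ^ (ℓ m).toNat * w m) =
      fun i => c ^ (wtZW n k ℓ i).toNat * zwPt z w i := by
  ext (j | m) <;> simp [zwPt, wtZW]

lemma zzuPt_dilate (c : ℝ) (z : Fin n → ℂ) (w : Fin k → ℂ) :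
    zzuPt (fun j => (c : ℂ) * z j) (fun m => (c : ℂ) ^ (ℓ m).toNat * w m) =
      fun i => (c : ℂ) ^ (wtZZU n k ℓ i).toNat * zzuPt z w i := by
  ext (j | j | m) <;> simp [zzuPt, wtZZU, ← ofReal_pow]

lemma dilate_mem_Mset (hℓ : ∀ l, 0 ≤ ℓ l) {Φ : Fin k → MvPolynomial (ZZU n k) ℂ}
    (hΦ : ∀ l, (Φ l).IsWeightedHomogeneous (wtZZU n k ℓ) (ℓ l)) {z : Fin n → ℂ}
    {w : Fin k → ℂ} (hzw : (z, w) ∈ Mset n k Φ) (c : ℝ) :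
    (fun j => (c : ℂ) * z j, fun m => (c : ℂ) ^ (ℓ m).toNat * w m) ∈ Mset n k Φ := by
  intro l
  change ((((c : ℂ) ^ (ℓ l).toNat * w l).im : ℝ) : ℂ) = eval (zzuPt _ _) (Φ l)
  rw [zzuPt_dilate, (hΦ l).eval_pow_weight_mul (wtZZU_nonneg hℓ), ← hzw l, ← ofReal_pow,
    im_ofReal_mul, ofReal_mul]

end CRDilation

section DefectPolynomial

variable {n k : ℕ} (ℓ : Fin k → ℤ) (Φ : Fin k → MvPolynomial (ZZU n k) ℂ)
  (Z : Fin n → MvPolynomial (ZW n k) ℂ) (W : Fin k → MvPolynomial (ZW n k) ℂ)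
  (z : Fin n → ℂ) (w : Fin k → ℂ) (l : Fin k)

def crDefect : ℂ :=
  (eval (zwPt z w) (W l) - starRingEnd ℂ (eval (zwPt z w) (W l))) / (2 * I)
    - (∑ j, eval (zwPt z w) (Z j) * eval (zzuPt z w) (pderiv (Sum.inl j) (Φ l)))
    - (∑ j, starRingEnd ℂ (eval (zwPt z w) (Z j)) *
        eval (zzuPt z w) (pderiv (Sum.inr (Sum.inl j)) (Φ l)))
    - (∑ m, ((eval (zwPt z w) (W m) + starRingEnd ℂ (eval (zwPt z w) (W m))) / 2) *
        eval (zzuPt z w) (pderiv (Sum.inr (Sum.inr m)) (Φ l)))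

lemma isCRAut_iff_crDefect :
    IsCRAut n k Φ Z W ↔ ∀ z w, (z, w) ∈ Mset n k Φ → ∀ l, crDefect Φ Z W z w l = 0 :=
  Iff.rfl

/-- The factor `X ^ s` makes room for the components of weight `t < -ℓ l`, whose coefficients
would otherwise sit in negative degree. -/
def defectPoly (s : ℕ) : Polynomial ℂ :=
  let A := fun (K : ℕ) F => dilation (wtZW n k ℓ) (zwPt z w) F * Polynomial.X ^ K
  let D := fun i => Polynomial.C (eval (zzuPt z w) (pderiv i (Φ l)))
  let cj := Polynomial.map (starRingEnd ℂ)
  Polynomial.C (2 * I)⁻¹ * (A s (W l) - cj (A s (W l)))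
    - ∑ j, A ((ℓ l - 1).toNat + s) (Z j) * D (Sum.inl j)
    - ∑ j, cj (A ((ℓ l - 1).toNat + s) (Z j)) * D (Sum.inr (Sum.inl j))
    - ∑ m, Polynomial.C 2⁻¹ * (A ((ℓ l - ℓ m).toNat + s) (W m)
        + cj (A ((ℓ l - ℓ m).toNat + s) (W m))) * D (Sum.inr (Sum.inr m))

variable {ℓ Φ}

lemma eval_defectPoly (hℓ : ∀ l, 0 ≤ ℓ l)
    (hΦ : ∀ l, (Φ l).IsWeightedHomogeneous (wtZZU n k ℓ) (ℓ l)) (s : ℕ) (c : ℝ) :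
    (defectPoly ℓ Φ Z W z w l s).eval (c : ℂ) = (c : ℂ) ^ s *
      crDefect Φ Z W (fun j => (c : ℂ) * z j) (fun m => (c : ℂ) ^ (ℓ m).toNat * w m) l := by
  have hD : ∀ i, eval (zzuPt (fun j => (c : ℂ) * z j) (fun m => (c : ℂ) ^ (ℓ m).toNat * w m))
      (pderiv i (Φ l)) =
        (c : ℂ) ^ (ℓ l - wtZZU n k ℓ i).toNat * eval (zzuPt z w) (pderiv i (Φ l)) :=
    fun i => by
      rw [zzuPt_dilate, ((hΦ l).pderiv (i := i) (sub_add_cancel _ _)).eval_pow_weight_mul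
        (wtZZU_nonneg hℓ)]
  simp only [defectPoly, crDefect, Polynomial.eval_sub, Polynomial.eval_add, Polynomial.eval_mul,
    Polynomial.eval_C, Polynomial.eval_finsetSum, Polynomial.eval_map_conj_ofReal,
    Polynomial.eval_X_pow, eval_dilation, ← zwPt_dilate, hD]
  simp only [map_mul, map_pow, conj_ofReal, wtZZU, Sum.elim_inl, Sum.elim_inr, mul_sub,
    Finset.mul_sum, pow_add]
  congr 1
  · congr 1
    · congr 1
      · ring
      · exact Finset.sum_congr rfl fun _ _ => by ring
    · exact Finset.sum_congr rfl fun _ _ => by ring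
  · exact Finset.sum_congr rfl fun _ _ => by ring

lemma coeff_defectPoly (hℓ : ∀ l, 1 ≤ ℓ l)
    (hΦ : ∀ l, (Φ l).IsWeightedHomogeneous (wtZZU n k ℓ) (ℓ l)) {s e : ℕ} {t : ℤ}
    (he : (e : ℤ) = s + ℓ l + t) :
    (defectPoly ℓ Φ Z W z w l s).coeff e =
      crDefect Φ (fun j => weightedHomogeneousComponent (wtZW n k ℓ) (1 + t) (Z j))
        (fun m => weightedHomogeneousComponent (wtZW n k ℓ) (ℓ m + t) (W m)) z w l := by
  have hℓ₀ : ∀ l, 0 ≤ ℓ l := fun l => zero_le_one.trans (hℓ l)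
  simp only [defectPoly, Polynomial.coeff_sub, Polynomial.coeff_add, Polynomial.finsetSum_coeff,
    Polynomial.coeff_C_mul, Polynomial.coeff_mul_C, Polynomial.coeff_map,
    coeff_dilation_mul_X_pow (wtZW_nonneg hℓ₀)]
  have hW : (e : ℤ) - s = ℓ l + t := by omega
  have hZ : (e : ℤ) - ((ℓ l - 1).toNat + s : ℕ) = 1 + t := by have := hℓ l; omega
  rw [hW, hZ, crDefect, div_eq_inv_mul]
  congr 1
  refine Finset.sum_congr rfl fun m _ => ?_
  rcases le_or_gt (ℓ m) (ℓ l) with hm | hm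
  · rw [show (e : ℤ) - ((ℓ l - ℓ m).toNat + s : ℕ) = ℓ m + t by omega, div_eq_inv_mul]
  · have hderiv := ((hΦ l).pderiv (i := Sum.inr (Sum.inr m)) (sub_add_cancel _ _)).eq_zero_of_neg
      (wtZZU_nonneg hℓ₀) (by simpa [wtZZU] using hm)
    simp [hderiv]

end DefectPolynomial

theorem stmt2_general (n k : ℕ) (ℓ : Fin k → ℤ)
    (hℓ : ∀ l, 1 < ℓ l)
    (Φ : Fin k → MvPolynomial (ZZU n k) ℂ)
    (hΦhom : ∀ l, (Φ l).IsWeightedHomogeneous (wtZZU n k ℓ) (ℓ l))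
    (Z : Fin n → MvPolynomial (ZW n k) ℂ) (W : Fin k → MvPolynomial (ZW n k) ℂ)
    (hX : IsCRAut n k Φ Z W) (t : ℤ) :
    IsCRAut n k Φ
      (fun j => weightedHomogeneousComponent (wtZW n k ℓ) (1 + t) (Z j))
      (fun l => weightedHomogeneousComponent (wtZW n k ℓ) (ℓ l + t) (W l)) := by
  have hℓ₁ : ∀ l, 1 ≤ ℓ l := fun l => (hℓ l).le
  have hℓ₀ : ∀ l, 0 ≤ ℓ l := fun l => zero_le_one.trans (hℓ₁ l)
  rw [isCRAut_iff_crDefect] at hX ⊢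
  intro z w hzw l
  have hpoly : defectPoly ℓ Φ Z W z w l t.natAbs = 0 :=
    Polynomial.eq_zero_of_forall_eval_ofReal _ fun c => by
      rw [eval_defectPoly Z W z w l hℓ₀ hΦhom, hX _ _ (dilate_mem_Mset hℓ₀ hΦhom hzw c) l,
        mul_zero]
  obtain ⟨e, he⟩ : ∃ e : ℕ, (e : ℤ) = t.natAbs + ℓ l + t :=
    ⟨(t.natAbs + ℓ l + t).toNat, by have := hℓ₀ l; omega⟩
  rw [← coeff_defectPoly Z W z w l hℓ₁ hΦhom he, hpoly, Polynomial.coeff_zero]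

/-- each weighted homogeneous component of an infinitesimal CR-automorphism of M
is again an infinitesimal CR-automorphism of M.  The component of weight `t` of
X = Σ_j Z^j ∂_{z_j} + Σ_l W^l ∂_{w_l} has coefficients the weighted homogeneous components of
weight `1 + t` of the `Z^j` and of weight `ℓ l + t` of the `W^l` (sums of the terms of those
weighted degrees in the Taylor expansions at 0). -/
theorem stmt2 (n k : ℕ) (hn : 0 < n) (hk : 0 < k) (ℓ : Fin k → ℤ)
    (hℓ : ∀ l, 1 < ℓ l) (hmono : Monotone ℓ)
    (Φ : Fin k → MvPolynomial (ZZU n k) ℂ)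
    (hΦhom : ∀ l, (Φ l).IsWeightedHomogeneous (wtZZU n k ℓ) (ℓ l))
    (hΦreal : ∀ l z w, starRingEnd ℂ (eval (zzuPt z w) (Φ l)) = eval (zzuPt z w) (Φ l))
    (Z : Fin n → MvPolynomial (ZW n k) ℂ) (W : Fin k → MvPolynomial (ZW n k) ℂ)
    (hX : IsCRAut n k Φ Z W) (t : ℤ) :
    IsCRAut n k Φ
      (fun j => weightedHomogeneousComponent (wtZW n k ℓ) (1 + t) (Z j))
      (fun l => weightedHomogeneousComponent (wtZW n k ℓ) (ℓ l + t) (W l)) :=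
  stmt2_general n k ℓ hℓ Φ hΦhom Z W hX t
end
end

section
/- Let g = ⊕_{i ∈ ℤ} g_i be a graded Lie algebra with [g_i, g_j] ⊆ g_{i+j} for all i, j, and with g_i = 0 for all i < −ρ, where ρ is a positive integer. Assume g is transitive: for every t ≥ 0 and every x ∈ g_t, if [x, y] = 0 for all y in g_i for every i < 0, then x = 0. If for some integer t ≥ 0 one has g_t = g_{t+1} = ⋯ = g_{t+ρ−1} = 0, then g_{t+ρ} = 0. -/
/-!
STATEMENT 10: let g = ⊕_{i ∈ ℤ} g_i be a graded Lie algebra with [g_i, g_j] ⊆ g_{i+j},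
g_i = 0 for i < −ρ (ρ a positive integer), which is transitive.  If for some t ≥ 0
g_t = g_{t+1} = ⋯ = g_{t+ρ−1} = 0, then g_{t+ρ} = 0.
-/

theorem stmt10 (K : Type*) [Field K] (g : Type*) [LieRing g] [LieAlgebra K g]
    (G : ℤ → Submodule K g)
    -- g is the internal direct sum of the subspaces g_i :
    (hdirect : DirectSum.IsInternal G)
    -- the grading is compatible with the bracket :
    (hgrade : ∀ i j : ℤ, ∀ x ∈ G i, ∀ y ∈ G j, ⁅x, y⁆ ∈ G (i + j))
    (ρ : ℕ) (hρ : 0 < ρ)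
    -- g_i = 0 for all i < −ρ :
    (hlow : ∀ i : ℤ, i < -(ρ : ℤ) → G i = ⊥)
    -- transitivity :
    (htrans : ∀ t : ℤ, 0 ≤ t → ∀ x ∈ G t,
      (∀ i : ℤ, i < 0 → ∀ y ∈ G i, ⁅x, y⁆ = 0) → x = 0)
    (t : ℤ) (ht : 0 ≤ t)
    (hzero : ∀ s : ℤ, t ≤ s → s < t + ρ → G s = ⊥) :
    G (t + ρ) = ⊥ := by
  rw [Submodule.eq_bot_iff]
  intro x hx
  apply htrans (t + ρ) (by positivity) x hx
  intro i hi y hy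
  rcases lt_or_ge i (-(ρ : ℤ)) with h | h
  · have : y = 0 := by
      have := hlow i h
      rw [this, Submodule.mem_bot] at hy
      exact hy
    simp [this]
  · have hb := hgrade (t + ρ) i x hx y hy
    have h1 : t ≤ t + ρ + i := by linarith
    have h2 : t + ρ + i < t + ρ := by linarith
    rw [hzero _ h1 h2, Submodule.mem_bot] at hb
    exact hb
end

section
/- Let g = ⊕_{i ∈ ℤ} g_i be a graded Lie algebra with [g_i, g_j] ⊆ g_{i+j}, g_i = 0 for i < −ρ (ρ a positive integer), which is transitive (for t ≥ 0 and x ∈ g_t, if [x, y] = 0 for all y in every g_i with i < 0, then x = 0), and whose negative part g_− = ⊕_{i < 0} g_i is fundamental, i.e. generated by g_{−1}: g_{−i−1} = [g_{−1}, g_{−i}] for every i ≥ 1. Then for every integer t ≥ 0, if g_t = 0 then g_{t+1} = 0. -/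
/-!
STATEMENT 11: let g = ⊕_{i ∈ ℤ} g_i be a transitive graded Lie algebra with
[g_i, g_j] ⊆ g_{i+j} and g_i = 0 for i < −ρ (ρ a positive integer), whose negative part
g_− = ⊕_{i<0} g_i is fundamental, i.e. g_{−i−1} = [g_{−1}, g_{−i}] for every i ≥ 1.
Then for every t ≥ 0, g_t = 0 implies g_{t+1} = 0.
-/

theorem stmt11 (K : Type*) [Field K] (g : Type*) [LieRing g] [LieAlgebra K g]
    (G : ℤ → Submodule K g)
    -- g is the internal direct sum of the subspaces g_i :
    (hdirect : DirectSum.IsInternal G)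
    -- the grading is compatible with the bracket :
    (hgrade : ∀ i j : ℤ, ∀ x ∈ G i, ∀ y ∈ G j, ⁅x, y⁆ ∈ G (i + j))
    (ρ : ℕ) (hρ : 0 < ρ)
    -- g_i = 0 for all i < −ρ :
    (hlow : ∀ i : ℤ, i < -(ρ : ℤ) → G i = ⊥)
    -- transitivity :
    (htrans : ∀ t : ℤ, 0 ≤ t → ∀ x ∈ G t,
      (∀ i : ℤ, i < 0 → ∀ y ∈ G i, ⁅x, y⁆ = 0) → x = 0)
    -- the negative part is fundamental : g_{−i−1} = [g_{−1}, g_{−i}] for every i ≥ 1 :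
    (hfund : ∀ i : ℕ, 1 ≤ i →
      G (-(i : ℤ) - 1) =
        Submodule.span K {z : g | ∃ x ∈ G (-1), ∃ y ∈ G (-(i : ℤ)), z = ⁅x, y⁆}) :
    ∀ t : ℤ, 0 ≤ t → G t = ⊥ → G (t + 1) = ⊥ := by
  intro t ht hGt
  rw [Submodule.eq_bot_iff]
  intro x hx
  refine htrans (t + 1) (by linarith) x hx ?_
  have key : ∀ n : ℕ, ∀ y ∈ G (-(n + 1 : ℤ)), ⁅x, y⁆ = 0 := by
    intro n
    induction n with
    | zero =>
      intro y hy
      have h1 : ⁅x, y⁆ ∈ G t := by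
        have := hgrade (t + 1) (-(0 + 1 : ℤ)) x hx y hy
        simpa using this
      rw [hGt] at h1
      simpa using h1
    | succ n ih =>
      intro y hy
      have hspan := hfund (n + 1) (by omega)
      have hy' : y ∈ Submodule.span K
          {z : g | ∃ a ∈ G (-1), ∃ b ∈ G (-((n + 1 : ℕ) : ℤ)), z = ⁅a, b⁆} := by
        rw [← hspan]
        have he : (-(((n + 1 : ℕ)) : ℤ) - 1) = (-(((n + 1 : ℕ) : ℤ) + 1)) := by ring
        rw [he]
        exact hy
      clear hy
      induction hy' using Submodule.span_induction with
      | mem z hz =>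
        obtain ⟨a, ha, b, hb, rfl⟩ := hz
        have hxa : ⁅x, a⁆ = 0 := by
          have h1 : ⁅x, a⁆ ∈ G t := by
            have := hgrade (t + 1) (-1) x hx a ha
            simpa using this
          rw [hGt] at h1
          simpa using h1
        have hxb : ⁅x, b⁆ = 0 := by
          apply ih
          have : (-(((n + 1 : ℕ)) : ℤ)) = -((n : ℤ) + 1) := by push_cast; ring
          rwa [this] at hb
        rw [leibniz_lie, hxa, hxb, zero_lie, lie_zero, add_zero]
      | zero => simp
      | add u v _ _ hu hv => rw [lie_add, hu, hv, add_zero]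
      | smul c u _ hu => rw [lie_smul, hu, smul_zero]
  intro i hi y hy
  obtain ⟨n, hn⟩ : ∃ n : ℕ, i = -(n + 1 : ℤ) := ⟨(-i - 1).toNat, by omega⟩
  exact key n y (hn ▸ hy)
end
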